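/- Lower bound for Exp4 mixture probabilities: Assume there exists ρ > 0 such that for all t ≥ 1 and all i ∈ [K], Σ_{j ∈ E} ξ_{j,t}(i) ≥ ρ. Let F ≥ |E|, ε ∈ (0, ρ/F), R > 0, θ ∈ [0, R], and T_ε = min( ⌊ (1/F − ε/ρ) · √n / R ⌋, n ). Then for every t ≤ T_ε and every k ∈ [K], the Exp4 mixture probability satisfies π_t^θ(k) ≥ ε. -/
import Mathlib


/-- Softmax distribution associated with a score vector. -/
noncomputable def softmax {ι : Type*} [Fintype ι] (h : ι → ℝ) (a : ι) : ℝ :=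
  Real.exp (h a) / ∑ b, Real.exp (h b)

/-- Cumulative estimated expert rewards `Y t j = Σ_{s=1}^t ŷ_{j,s}` of the `Exp4`
algorithm with learning rate `θ/√n`, where
`ŷ_{j,s} = ξ_{j,s}(A_s) g_{A_s,s} / π_s(A_s)` and
`π_s(a) = Σ_i q_s(i) ξ_{i,s}(a)`. -/
noncomputable def exp4Y (n K : ℕ) {E : Type*} [Fintype E]
    (ξ : E → ℕ → Fin K → ℝ) (g : Fin K → ℕ → ℝ) (A : ℕ → Fin K) (θ : ℝ) :
    ℕ → E → ℝ
  | 0 => fun _ => 0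
  | (t + 1) => fun j =>
      exp4Y n K ξ g A θ t j +
        ξ j (t + 1) (A (t + 1)) * g (A (t + 1)) (t + 1) /
          (∑ i, softmax (fun i' => -(θ / Real.sqrt n) * exp4Y n K ξ g A θ t i') i *
            ξ i (t + 1) (A (t + 1)))

/-- The `Exp4` expert weights: `q_1` is uniform over experts and
`q_{t+1} = softmax(−(θ/√n) Σ_{s≤t} ŷ_{·,s})`. -/
noncomputable def exp4q (n K : ℕ) {E : Type*} [Fintype E]
    (ξ : E → ℕ → Fin K → ℝ) (g : Fin K → ℕ → ℝ) (A : ℕ → Fin K) (θ : ℝ)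
    (t : ℕ) : E → ℝ :=
  softmax (fun i => -(θ / Real.sqrt n) * exp4Y n K ξ g A θ (t - 1) i)

/-- The `Exp4` mixture action probabilities `π_t(a) = Σ_j q_t(j) ξ_{j,t}(a)`. -/
noncomputable def exp4Pi (n K : ℕ) {E : Type*} [Fintype E]
    (ξ : E → ℕ → Fin K → ℝ) (g : Fin K → ℕ → ℝ) (A : ℕ → Fin K) (θ : ℝ)
    (t : ℕ) (a : Fin K) : ℝ :=
  ∑ j, exp4q n K ξ g A θ t j * ξ j t a


section Aux

variable {ι : Type*} [Fintype ι] [Nonempty ι]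

lemma softmax_pos (h : ι → ℝ) (a : ι) : 0 < softmax h a :=
  div_pos (Real.exp_pos _) (Finset.sum_pos (fun b _ => Real.exp_pos _) Finset.univ_nonempty)

lemma softmax_const (c : ℝ) (a : ι) : softmax (fun _ => c) a = (Fintype.card ι : ℝ)⁻¹ := by
  have hcard : (0 : ℝ) < (Fintype.card ι : ℝ) := by
    exact_mod_cast Fintype.card_pos
  simp only [softmax, Finset.sum_const, Finset.card_univ, nsmul_eq_mul]
  rw [div_eq_iff (by positivity)]
  field_simp

lemma exp4Y_nonneg (n K : ℕ) {E : Type*} [Fintype E] [Nonempty E]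
    (ξ : E → ℕ → Fin K → ℝ) (hξ0 : ∀ j t a, 0 ≤ ξ j t a)
    (g : Fin K → ℕ → ℝ) (hg : ∀ a t, 0 ≤ g a t)
    (A : ℕ → Fin K) (θ : ℝ) :
    ∀ t j, 0 ≤ exp4Y n K ξ g A θ t j := by
  intro t
  induction t with
  | zero => intro j; simp [exp4Y]
  | succ t ih =>
    intro j
    show 0 ≤ exp4Y n K ξ g A θ t j + _
    refine add_nonneg (ih j) (div_nonneg (mul_nonneg (hξ0 _ _ _) (hg _ _)) ?_)
    exact Finset.sum_nonneg fun i _ => mul_nonneg (softmax_pos _ _).le (hξ0 _ _ _)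

/-- One-step decrease bound for the `Exp4` weights. -/
lemma exp4q_step (n K : ℕ) {E : Type*} [Fintype E] [Nonempty E]
    (ξ : E → ℕ → Fin K → ℝ) (hξ0 : ∀ j t a, 0 ≤ ξ j t a)
    (g : Fin K → ℕ → ℝ) (hg : ∀ a t, g a t ∈ Set.Icc (0 : ℝ) 1)
    (A : ℕ → Fin K) (θ : ℝ) (hθ0 : 0 ≤ θ)
    (t : ℕ) (hpos : 0 < ∑ i, ξ i (t + 1) (A (t + 1))) (j : E) :
    exp4q n K ξ g A θ (t + 1) j - θ / Real.sqrt n ≤ exp4q n K ξ g A θ (t + 2) j := by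
  set η : ℝ := θ / Real.sqrt n with hηdef
  have hη0 : 0 ≤ η := div_nonneg hθ0 (Real.sqrt_nonneg _)
  set Yt : E → ℝ := exp4Y n K ξ g A θ t with hYt
  have hYt0 : ∀ i, 0 ≤ Yt i := fun i =>
    exp4Y_nonneg n K ξ hξ0 g (fun a s => (hg a s).1) A θ t i
  set D : ℝ := ∑ i, softmax (fun i' => -η * Yt i') i * ξ i (t + 1) (A (t + 1)) with hD
  set y : E → ℝ := fun i => ξ i (t + 1) (A (t + 1)) * g (A (t + 1)) (t + 1) / D with hy
  have hD0 : 0 ≤ D :=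
    Finset.sum_nonneg fun i _ => mul_nonneg (softmax_pos _ _).le (hξ0 _ _ _)
  have hy0 : ∀ i, 0 ≤ y i := fun i =>
    div_nonneg (mul_nonneg (hξ0 _ _ _) (hg _ _).1) hD0
  -- D is positive
  have hDpos : 0 < D := by
    obtain ⟨i0, hi0⟩ : ∃ i0, 0 < ξ i0 (t + 1) (A (t + 1)) := by
      by_contra h
      push_neg at h
      have : ∑ i, ξ i (t + 1) (A (t + 1)) = 0 :=
        Finset.sum_eq_zero fun i _ => le_antisymm (h i) (hξ0 _ _ _)
      rw [this] at hpos; exact lt_irrefl _ hpos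
    have h1 : softmax (fun i' => -η * Yt i') i0 * ξ i0 (t + 1) (A (t + 1)) ≤ D :=
      Finset.single_le_sum (f := fun i => softmax (fun i' => -η * Yt i') i * ξ i (t + 1) (A (t + 1)))
        (fun i _ => mul_nonneg (softmax_pos _ _).le (hξ0 _ _ _)) (Finset.mem_univ i0)
    exact lt_of_lt_of_le (mul_pos (softmax_pos _ _) hi0) h1
  -- q_{t+1} j * y j ≤ 1
  have hqy : ∀ i, exp4q n K ξ g A θ (t + 1) i * y i ≤ 1 := by
    intro i
    have hq_eq : exp4q n K ξ g A θ (t + 1) i = softmax (fun i' => -η * Yt i') i := rfl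
    rw [hq_eq, hy]
    rw [mul_div_assoc'] 
    rw [div_le_one hDpos]
    calc softmax (fun i' => -η * Yt i') i * (ξ i (t + 1) (A (t + 1)) * g (A (t + 1)) (t + 1))
        ≤ softmax (fun i' => -η * Yt i') i * (ξ i (t + 1) (A (t + 1)) * 1) := by
          refine mul_le_mul_of_nonneg_left ?_ (softmax_pos _ _).le
          exact mul_le_mul_of_nonneg_left (hg _ _).2 (hξ0 _ _ _)
      _ = softmax (fun i' => -η * Yt i') i * ξ i (t + 1) (A (t + 1)) := by ring
      _ ≤ D := Finset.single_le_sum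
          (f := fun i => softmax (fun i' => -η * Yt i') i * ξ i (t + 1) (A (t + 1)))
          (fun i _ => mul_nonneg (softmax_pos _ _).le (hξ0 _ _ _)) (Finset.mem_univ i)
  -- unfold q_{t+2}
  have hY1 : ∀ i, exp4Y n K ξ g A θ (t + 1) i = Yt i + y i := fun i => rfl
  have hq2 : exp4q n K ξ g A θ (t + 2) j
      = Real.exp (-η * Yt j) * Real.exp (-η * y j) /
        ∑ i, Real.exp (-η * Yt i) * Real.exp (-η * y i) := by
    have hsplit : ∀ i, Real.exp (-η * (Yt i + y i))
        = Real.exp (-η * Yt i) * Real.exp (-η * y i) := by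
      intro i
      rw [← Real.exp_add]
      congr 1
      ring
    show softmax (fun i => -η * exp4Y n K ξ g A θ (t + 1) i) j = _
    unfold softmax
    simp only [hY1, hsplit]
  set S : ℝ := ∑ i, Real.exp (-η * Yt i) with hS
  have hSpos : 0 < S := Finset.sum_pos (fun i _ => Real.exp_pos _) Finset.univ_nonempty
  have hq1 : exp4q n K ξ g A θ (t + 1) j = Real.exp (-η * Yt j) / S := rfl
  have hTS : ∑ i, Real.exp (-η * Yt i) * Real.exp (-η * y i) ≤ S := by
    refine Finset.sum_le_sum fun i _ => ?_
    have : Real.exp (-η * y i) ≤ 1 := by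
      rw [Real.exp_le_one_iff]
      have := mul_nonneg hη0 (hy0 i)
      linarith
    calc Real.exp (-η * Yt i) * Real.exp (-η * y i)
        ≤ Real.exp (-η * Yt i) * 1 := mul_le_mul_of_nonneg_left this (Real.exp_pos _).le
      _ = Real.exp (-η * Yt i) := mul_one _
  have hTpos : 0 < ∑ i, Real.exp (-η * Yt i) * Real.exp (-η * y i) :=
    Finset.sum_pos (fun i _ => mul_pos (Real.exp_pos _) (Real.exp_pos _)) Finset.univ_nonempty
  have step1 : Real.exp (-η * Yt j) * Real.exp (-η * y j) / S ≤ exp4q n K ξ g A θ (t + 2) j := by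
    rw [hq2]
    exact div_le_div_of_nonneg_left (mul_pos (Real.exp_pos _) (Real.exp_pos _)).le hTpos hTS
  have step2 : exp4q n K ξ g A θ (t + 1) j * Real.exp (-η * y j)
      = Real.exp (-η * Yt j) * Real.exp (-η * y j) / S := by
    rw [hq1]; ring
  have step3 : exp4q n K ξ g A θ (t + 1) j * (1 - η * y j)
      ≤ exp4q n K ξ g A θ (t + 1) j * Real.exp (-η * y j) := by
    refine mul_le_mul_of_nonneg_left ?_ (softmax_pos _ _).le
    have := Real.add_one_le_exp (-(η * y j))
    have h' : -(η * y j) + 1 ≤ Real.exp (-(η * y j)) := this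
    calc 1 - η * y j = -(η * y j) + 1 := by ring
      _ ≤ Real.exp (-(η * y j)) := h'
      _ = Real.exp (-η * y j) := by ring_nf
  have step4 : exp4q n K ξ g A θ (t + 1) j - η ≤ exp4q n K ξ g A θ (t + 1) j * (1 - η * y j) := by
    have h1 : η * (exp4q n K ξ g A θ (t + 1) j * y j) ≤ η * 1 :=
      mul_le_mul_of_nonneg_left (hqy j) hη0
    nlinarith [hqy j]
  linarith

end Aux


/-- lower bound for `Exp4` mixture probabilities. If
`Σ_j ξ_{j,t}(i) ≥ ρ` for all `t ≥ 1` and `i`, `F ≥ |E|`, `ε ∈ (0, ρ/F)`,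
`θ ∈ [0, R]` and `T_ε = min(⌊(1/F − ε/ρ)√n/R⌋, n)`, then `π_t(k) ≥ ε` for all
`1 ≤ t ≤ T_ε` and all `k`. -/

theorem exp4_lower_bound (n K : ℕ) (hn : 1 ≤ n) (hK : 2 ≤ K)
    {E : Type*} [Fintype E] [Nonempty E]
    (ξ : E → ℕ → Fin K → ℝ)
    (hξ0 : ∀ j t a, 0 ≤ ξ j t a) (hξ1 : ∀ j t, ∑ a, ξ j t a = 1)
    (g : Fin K → ℕ → ℝ) (hg : ∀ a t, g a t ∈ Set.Icc (0 : ℝ) 1)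
    (A : ℕ → Fin K)
    (ρ : ℝ) (hρ : 0 < ρ) (hρξ : ∀ t, 1 ≤ t → ∀ i : Fin K, ρ ≤ ∑ j, ξ j t i)
    (F : ℕ) (hF : Fintype.card E ≤ F)
    (ε R θ : ℝ) (hε : 0 < ε) (hεF : ε < ρ / F) (hR : 0 < R) (hθ : θ ∈ Set.Icc 0 R)
    (Tε : ℕ) (hTε : Tε = min ⌊(1 / F - ε / ρ) * Real.sqrt n / R⌋₊ n) :
    ∀ t, 1 ≤ t → t ≤ Tε → ∀ k, ε ≤ exp4Pi n K ξ g A θ t k := by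
  have hθ0 : (0:ℝ) ≤ θ := hθ.1
  have hθR : θ ≤ R := hθ.2
  set η : ℝ := θ / Real.sqrt n with hηdef
  have hsqrt : (0:ℝ) < Real.sqrt n := Real.sqrt_pos.mpr (by exact_mod_cast hn)
  have hη0 : 0 ≤ η := div_nonneg hθ0 (Real.sqrt_nonneg _)
  have hηR : η ≤ R / Real.sqrt n := by
    rw [hηdef]
    gcongr
  have hcard1 : 1 ≤ Fintype.card E := Fintype.card_pos
  have hFpos : (0:ℝ) < (F:ℝ) := by
    have : 1 ≤ F := le_trans hcard1 hF
    exact_mod_cast this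
  -- lower bound on the weights
  have hqlb : ∀ m : ℕ, ∀ j : E,
      (Fintype.card E : ℝ)⁻¹ - m * η ≤ exp4q n K ξ g A θ (m + 1) j := by
    intro m
    induction m with
    | zero =>
      intro j
      have : exp4q n K ξ g A θ 1 j = (Fintype.card E : ℝ)⁻¹ := by
        show softmax (fun i => -(θ / Real.sqrt n) * exp4Y n K ξ g A θ 0 i) j = _
        have : (fun i : E => -(θ / Real.sqrt n) * exp4Y n K ξ g A θ 0 i)
            = fun _ : E => (0:ℝ) := by
          funext i; simp [exp4Y]
        rw [this, softmax_const]
      rw [this]; simp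
    | succ m ih =>
      intro j
      have hpos : 0 < ∑ i, ξ i (m + 1) (A (m + 1)) :=
        lt_of_lt_of_le hρ (hρξ (m + 1) (Nat.le_add_left 1 m) (A (m + 1)))
      have hstep := exp4q_step n K ξ hξ0 g hg A θ hθ0 m hpos j
      have := ih j
      push_cast
      rw [hηdef] at *
      linarith
  intro t ht htT k
  obtain ⟨m, rfl⟩ : ∃ m, t = m + 1 := ⟨t - 1, (Nat.succ_pred_eq_of_pos ht).symm⟩
  set c : ℝ := (Fintype.card E : ℝ)⁻¹ - m * η with hc
  -- bound on m * η
  have hεposρ : 0 < ε / ρ := div_pos hε hρ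
  have hεlt : ε / ρ < 1 / (F:ℝ) := by
    rw [div_lt_div_iff₀ hρ hFpos]
    rw [lt_div_iff₀ hFpos] at hεF
    linarith
  have hXnn : (0:ℝ) ≤ (1 / F - ε / ρ) * Real.sqrt n / R := by
    have : (0:ℝ) ≤ 1 / F - ε / ρ := by linarith
    positivity
  have hTle : (Tε:ℝ) ≤ (1 / F - ε / ρ) * Real.sqrt n / R := by
    have h1 : Tε ≤ ⌊(1 / F - ε / ρ) * Real.sqrt n / R⌋₊ := by
      rw [hTε]; exact min_le_left _ _
    calc (Tε:ℝ) ≤ (⌊(1 / F - ε / ρ) * Real.sqrt n / R⌋₊ : ℝ) := by exact_mod_cast h1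
      _ ≤ _ := Nat.floor_le hXnn
  have hmη : (m:ℝ) * η ≤ 1 / F - ε / ρ := by
    have h1 : (m:ℝ) ≤ (Tε:ℝ) := by
      have : m ≤ Tε := le_trans (Nat.le_succ m) htT
      exact_mod_cast this
    have h2 : (m:ℝ) * η ≤ (Tε:ℝ) * (R / Real.sqrt n) := by
      have := mul_le_mul h1 hηR hη0 (Nat.cast_nonneg Tε)
      linarith
    have h3 : (Tε:ℝ) * (R / Real.sqrt n)
        ≤ ((1 / F - ε / ρ) * Real.sqrt n / R) * (R / Real.sqrt n) := by
      refine mul_le_mul_of_nonneg_right hTle (by positivity)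
    have h4 : ((1 / F - ε / ρ) * Real.sqrt n / R) * (R / Real.sqrt n) = 1 / F - ε / ρ := by
      field_simp
    linarith
  have hcε : ε / ρ ≤ c := by
    have hcardF : 1 / (F:ℝ) ≤ (Fintype.card E : ℝ)⁻¹ := by
      rw [one_div]
      refine inv_anti₀ ?_ ?_
      · exact_mod_cast hcard1
      · exact_mod_cast hF
    rw [hc]
    linarith
  have hc0 : 0 ≤ c := le_trans hεposρ.le hcε
  -- assemble
  have hq : ∀ j : E, c ≤ exp4q n K ξ g A θ (m + 1) j := hqlb m
  have hsum : c * ∑ j, ξ j (m + 1) k ≤ exp4Pi n K ξ g A θ (m + 1) k := by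
    rw [exp4Pi, Finset.mul_sum]
    exact Finset.sum_le_sum fun j _ => mul_le_mul_of_nonneg_right (hq j) (hξ0 j (m + 1) k)
  have hρs : ρ ≤ ∑ j, ξ j (m + 1) k := hρξ (m + 1) (Nat.le_add_left 1 m) k
  calc ε = (ε / ρ) * ρ := by field_simp
    _ ≤ c * ρ := mul_le_mul_of_nonneg_right hcε hρ.le
    _ ≤ c * ∑ j, ξ j (m + 1) k := mul_le_mul_of_nonneg_left hρs hc0
    _ ≤ _ := hsum
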